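/- arXiv:1511.06989 — 3 statements merged into one kernel-verified Lean document; each statement's English description precedes it below -/
import Mathlib

section
/- With f₄(n) = (n⁴ − 14n³ + 47n² − 34n)/24 and g as defined by g(2k−1) = 2^(k−6)·55, g(2k) = 2^(k−6)·89 for k ≥ 6, one has g(n) ≤ f₄(n) if and only if 11 ≤ n ≤ 25 (for integers n ≥ 11). -/
def f₄ (n : ℤ) : ℚ := ((n ^ 4 - 14 * n ^ 3 + 47 * n ^ 2 - 34 * n : ℤ) : ℚ) / 24

def g (n : ℤ) : ℤ :=
  if n % 2 = 0 then 2 ^ (n / 2 - 6).toNat * 89 else 2 ^ ((n + 1) / 2 - 6).toNat * 55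

/-!
Clearing the denominator, `g n ≤ f₄ n` says `24 g(n) ≤ n⁴ - 14n³ + 47n² - 34n`. For `n ≥ 11`
the function `g` doubles when `n` grows by two, whereas for `n ≥ 26` the quartic grows by a
factor of at most two. Since the inequality fails at `n = 26` and `n = 27`, it fails for all
`n ≥ 26`; the fifteen cases `11 ≤ n ≤ 25` are checked directly.
-/

def quartic (n : ℤ) : ℤ := n ^ 4 - 14 * n ^ 3 + 47 * n ^ 2 - 34 * n

lemma g_le_f₄_iff (n : ℤ) : (g n : ℚ) ≤ f₄ n ↔ 24 * g n ≤ quartic n := by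
  rw [f₄, le_div_iff₀ (by norm_num), mul_comm, ← quartic]
  exact_mod_cast Iff.rfl

lemma g_add_two {n : ℤ} (hn : 11 ≤ n) : g (n + 2) = 2 * g n := by
  unfold g
  rw [show (n + 2) % 2 = n % 2 by omega]
  split_ifs
  · rw [show ((n + 2) / 2 - 6).toNat = (n / 2 - 6).toNat + 1 by omega, pow_succ]; ring
  · rw [show ((n + 2 + 1) / 2 - 6).toNat = ((n + 1) / 2 - 6).toNat + 1 by omega, pow_succ]; ring

lemma quartic_add_two_le {n : ℤ} (hn : 26 ≤ n) : quartic (n + 2) ≤ 2 * quartic n := by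
  unfold quartic
  nlinarith [sq_nonneg n, mul_nonneg (sub_nonneg.2 hn) (sq_nonneg n)]

lemma quartic_lt_24_mul_g {n : ℤ} (hn : 26 ≤ n) : quartic n < 24 * g n := by
  obtain ⟨m, rfl⟩ : ∃ m : ℕ, n = 26 + m := ⟨(n - 26).toNat, by omega⟩
  clear hn
  induction m using Nat.twoStepInduction with
  | zero => decide
  | one => decide
  | more m ih _ =>
    rw [show (26 : ℤ) + (m + 2 : ℕ) = 26 + m + 2 by push_cast; ring, g_add_two (by omega)]
    linarith [quartic_add_two_le (n := 26 + m) (by omega)]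

/-- For integers `n ≥ 11`, `g(n) ≤ f₄(n)` iff `11 ≤ n ≤ 25`. -/
theorem stmt7 : ∀ n : ℤ, 11 ≤ n → ((g n : ℚ) ≤ f₄ n ↔ n ≤ 25) := by
  intro n hn
  rw [g_le_f₄_iff]
  constructor
  · intro h
    by_contra! hlarge
    exact (quartic_lt_24_mul_g hlarge).not_ge h
  · intro h
    interval_cases n <;> decide
end

section
/- For a prime p and n ≥ 2m+2 with μ a p-regular partition of n whose largest part is exactly n−m, the rightmost p-ladder intersecting the Young diagram of μ meets μ in exactly one node, namely the node (1, n−m). -/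
/-!
Every part of `μ` below the first row is small: the `r` rows above row `r` (other than the
first) each have at least `μ r` nodes, so `r * μ r ≤ n - μ 0 = m`, whence `r + μ r ≤ m + 1`.
A node `(r, c)` with `r > 0` therefore has `r + c < m + 1 < μ 0 - 1`, and since `p - 1 ≥ 1`
its ladder index `r + (p-1) c` stays below `(p-1)(μ 0 - 1)`. In the first row the ladder
index is increasing in `c`, so only the last node reaches the maximum.
-/

open Finset

theorem Antitone.nsmul_le_sum_range_succ {M : Type*} [AddCommMonoid M] [PartialOrder M]
    [IsOrderedAddMonoid M] {f : ℕ → M} (hf : Antitone f) (r : ℕ) :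
    r • f r ≤ ∑ i ∈ range r, f (i + 1) := by
  simpa using card_nsmul_le_sum (range r) (fun i ↦ f (i + 1)) (f r)
    fun i hi ↦ hf (by simp at hi; omega)

theorem mul_le_sub_of_sum_range_eq {μ : ℕ → ℕ} {n r : ℕ} (hmono : Antitone μ)
    (hzero : μ n = 0) (hsum : ∑ i ∈ range n, μ i = n) (hr : 0 < μ r) :
    r * μ r ≤ n - μ 0 := by
  have hrn : r < n := by
    by_contra! h
    have := hmono h
    omega
  have htail : ∑ i ∈ range (n - 1), μ (i + 1) + μ 0 = n := by
    rwa [← sum_range_succ', Nat.sub_add_cancel (by omega)]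
  have hpref : ∑ i ∈ range r, μ (i + 1) ≤ ∑ i ∈ range (n - 1), μ (i + 1) :=
    sum_le_sum_of_subset (range_subset_range.mpr (by omega))
  have := hmono.nsmul_le_sum_range_succ r
  rw [smul_eq_mul] at this
  omega

theorem add_lt_of_mul_le {r c k m : ℕ} (hr : 0 < r) (hc : c < k) (h : r * k ≤ m) :
    r + c < m + 1 := by
  nlinarith

theorem add_mul_lt_mul_of_add_lt {q r c L : ℕ} (hq : 1 ≤ q) (h : r + c < L) :
    r + q * c < q * L :=
  calc r + q * c ≤ q * (r + c) := by nlinarith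
    _ < q * L := by gcongr

theorem stmt12_general (p n m : ℕ) (hp : p.Prime) (hn : 2 * m + 2 ≤ n)
    (μ : ℕ → ℕ) (hmono : Antitone μ) (hzero : μ n = 0)
    (hsum : ∑ i ∈ Finset.range n, μ i = n)
    (hfirst : μ 0 = n - m) :
    0 < μ 0 ∧
    ∀ r c : ℕ, c < μ r →
      r + (p - 1) * c < (p - 1) * (μ 0 - 1) ∨ (r = 0 ∧ c = μ 0 - 1) := by
  have hq : 1 ≤ p - 1 := by have := hp.two_le; omega
  refine ⟨by omega, fun r c hc ↦ ?_⟩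
  rcases Nat.eq_zero_or_pos r with rfl | hr
  · rcases (Nat.le_sub_one_of_lt hc).lt_or_eq with hlt | heq
    · exact Or.inl (by simpa using add_mul_lt_mul_of_add_lt (r := 0) hq (by omega))
    · exact Or.inr ⟨rfl, heq⟩
  · have hsmall : r * μ r ≤ m := by
      have := mul_le_sub_of_sum_range_eq hmono hzero hsum (c.zero_le.trans_lt hc)
      omega
    have := add_lt_of_mul_le hr hc hsmall
    exact Or.inl (add_mul_lt_mul_of_add_lt hq (by omega))

/-- Let `p` be a prime and `μ` a `p`-regular partition of `n` (encoded as an antitone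
function `ℕ → ℕ` of parts, 0-indexed, with at most `n` parts summing to `n`, in which
no positive part is repeated `p` times) whose largest part is `μ 0 = n - m`.  The
`p`-ladder index of the (0-indexed) node `(r, c)` is `r + (p-1)·c`.  If `n ≥ 2m + 2`,
then the rightmost ladder meeting `μ` intersects it in exactly one node, namely the
node `(0, μ 0 - 1)` (i.e. the node `(1, n-m)` in 1-indexed notation): the node
`(0, μ 0 - 1)` lies in `μ`, and every other node of `μ` has strictly smaller ladder
index. -/
theorem stmt12 (p n m : ℕ) (hp : p.Prime) (hn : 2 * m + 2 ≤ n)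
    (μ : ℕ → ℕ) (hmono : Antitone μ) (hzero : μ n = 0)
    (hsum : ∑ i ∈ Finset.range n, μ i = n)
    (hreg : ∀ i, μ i = μ (i + (p - 1)) → μ i = 0)
    (hfirst : μ 0 = n - m) :
    0 < μ 0 ∧
    ∀ r c : ℕ, c < μ r →
      r + (p - 1) * c < (p - 1) * (μ 0 - 1) ∨ (r = 0 ∧ c = μ 0 - 1) :=
  stmt12_general p n m hp hn μ hmono hzero hsum hfirst
end

section
/- If p ≥ 3 and μ is a p-regular partition of n with μ₁ = n−m and n ≥ 2m+1, and the rightmost p-ladder intersecting μ contains at least two nodes of μ, then n ≤ ⌊pm/(p−1)⌋ + 1. -/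
/-!
The node `(0, n - m - 1)` of the first row lies on ladder `(p - 1)(n - m - 1)`, so the rightmost
ladder has index `L ≥ (p - 1)(n - m - 1)`. Of two distinct nodes on one ladder, the lower one
`(s, d)` has `s ≥ p - 1`, hence `L = s + (p - 1) d ≤ s (d + 1)`. Rows `1, …, s` of `μ` all have
length `> d`, so `s (d + 1)` is at most `m`, the size of `μ` below its first row. Thus
`(p - 1)(n - m - 1) ≤ m`, which rearranges to the bound.
-/

theorem Antitone.mul_succ_add_le_sum {μ : ℕ → ℕ} (hμ : Antitone μ) {n s d : ℕ}
    (hzero : μ n = 0) (hd : d < μ s) : s * (d + 1) + μ 0 ≤ ∑ i ∈ Finset.range n, μ i := by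
  have hs : s < n := by
    by_contra! h
    have := hμ h
    omega
  calc s * (d + 1) + μ 0 ≤ ∑ i ∈ Finset.range s, μ (i + 1) + μ 0 := by
        gcongr
        calc s * (d + 1) ≤ s * μ s := Nat.mul_le_mul_left s hd
          _ = ∑ _i ∈ Finset.range s, μ s := by simp
          _ ≤ _ := Finset.sum_le_sum fun i hi => hμ (Finset.mem_range.1 hi)
    _ = ∑ i ∈ Finset.range (s + 1), μ i := (Finset.sum_range_succ' μ s).symm
    _ ≤ ∑ i ∈ Finset.range n, μ i := Finset.sum_le_sum_of_subset (by simpa using hs)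

theorem ladder_le_mul_succ_of_lt {q r c r' c' : ℕ} (hlt : r < r')
    (heq : r + q * c = r' + q * c') : r' + q * c' ≤ r' * (c' + 1) := by
  have hc : c' < c := by
    by_contra! h
    nlinarith
  have hqr : q ≤ r' := by nlinarith
  nlinarith

theorem ladder_le_mul_succ_of_ne {q r c r' c' : ℕ} (hq : 0 < q) (hne : (r, c) ≠ (r', c'))
    (heq : r + q * c = r' + q * c') :
    r + q * c ≤ r * (c + 1) ∨ r + q * c ≤ r' * (c' + 1) := by
  rcases lt_trichotomy r r' with h | rfl | h
  · exact .inr (heq ▸ ladder_le_mul_succ_of_lt h heq)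
  · exact absurd (by simp_all) hne
  · exact .inl (ladder_le_mul_succ_of_lt h heq.symm)

theorem le_mul_div_pred_add_one {p n m : ℕ} (hp : 1 < p) (h : (p - 1) * (n - m - 1) ≤ m) :
    n ≤ p * m / (p - 1) + 1 := by
  have hdiv : p * m / (p - 1) = m + m / (p - 1) := by
    rw [show p * m = (p - 1) * m + m by
      rw [← Nat.succ_mul, Nat.succ_eq_add_one, Nat.sub_add_cancel hp.le], Nat.mul_add_div (by omega)]
  have hle : n - m - 1 ≤ m / (p - 1) :=
    (Nat.le_div_iff_mul_le (by omega)).2 (by rwa [mul_comm])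
  omega

theorem stmt13_general (p n m : ℕ) (hp3 : 3 ≤ p) (hn : 2 * m + 1 ≤ n)
    (μ : ℕ → ℕ) (hmono : Antitone μ) (hzero : μ n = 0)
    (hsum : ∑ i ∈ Finset.range n, μ i = n)
    (hfirst : μ 0 = n - m)
    (htwo : ∃ r c r' c' : ℕ, (r, c) ≠ (r', c') ∧ c < μ r ∧ c' < μ r' ∧
        r + (p - 1) * c = r' + (p - 1) * c' ∧
        ∀ r'' c'' : ℕ, c'' < μ r'' → r'' + (p - 1) * c'' ≤ r + (p - 1) * c) :
    n ≤ p * m / (p - 1) + 1 := by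
  obtain ⟨r, c, r', c', hne, hc, hc', heq, hmax⟩ := htwo
  have hfirst_row : (p - 1) * (n - m - 1) ≤ r + (p - 1) * c := by
    simpa using hmax 0 (n - m - 1) (by omega)
  have hrect : ∀ s d, d < μ s → s * (d + 1) ≤ m := fun s d hd => by
    have := hmono.mul_succ_add_le_sum hzero hd
    omega
  apply le_mul_div_pred_add_one (by omega)
  rcases ladder_le_mul_succ_of_ne (by omega) hne heq with h | h
  · exact hfirst_row.trans (h.trans (hrect r c hc))
  · exact hfirst_row.trans (h.trans (hrect r' c' hc'))

/-- Let `p ≥ 3` be a prime and `μ` a `p`-regular partition of `n` (encoded as an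
antitone function `ℕ → ℕ` of parts, 0-indexed, with at most `n` parts summing to `n`,
no positive part repeated `p` times) whose largest part is `μ 0 = n - m`, with
`n ≥ 2m + 1`.  The `p`-ladder index of the 0-indexed node `(r, c)` is `r + (p-1)·c`.
If the rightmost `p`-ladder intersecting `μ` (the one of maximal ladder index among
nodes of `μ`) contains at least two nodes of `μ`, then `n ≤ ⌊pm/(p−1)⌋ + 1`. -/
theorem stmt13 (p n m : ℕ) (hp : p.Prime) (hp3 : 3 ≤ p) (hn : 2 * m + 1 ≤ n)
    (μ : ℕ → ℕ) (hmono : Antitone μ) (hzero : μ n = 0)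
    (hsum : ∑ i ∈ Finset.range n, μ i = n)
    (hreg : ∀ i, μ i = μ (i + (p - 1)) → μ i = 0)
    (hfirst : μ 0 = n - m)
    (htwo : ∃ r c r' c' : ℕ, (r, c) ≠ (r', c') ∧ c < μ r ∧ c' < μ r' ∧
        r + (p - 1) * c = r' + (p - 1) * c' ∧
        ∀ r'' c'' : ℕ, c'' < μ r'' → r'' + (p - 1) * c'' ≤ r + (p - 1) * c) :
    n ≤ p * m / (p - 1) + 1 :=
  stmt13_general p n m hp3 hn μ hmono hzero hsum hfirst htwo
end
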